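/- arXiv:math-ph/0404002 — 3 statements merged into one kernel-verified Lean document; each statement's English description precedes it below -/
import Mathlib

section
/- For every legless basis multigraph G with vertex set V(G) = {1,…,R}, one has in 𝒢̃ the identity ΔG = 2·Σ_{1≤i<j≤R} {i,j}·G − 2R·Σ_{i=1}^R {i,R+1}·G + R(R+1)·{R+1,R+2}·G, where {i,j}·G denotes G with one extra edge {i,j}. -/
/-!
Applying `δ` to a legless `G` adds a leg at a vertex of `G`, or, with weight `-R`, at the fresh
vertex `R + 1`; applying it again produces multigraphs with exactly two legs, and `C` joins these
two legs into an edge, two legs at the same vertex giving back `G`. The ordered pairs of old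
vertices contribute twice the sum over `i < j` plus `R` copies of `G`, and these cancel the `-R G`
coming from the pair of legs at `R + 1`. The two mixed terms each contribute
`-R Σ_i {i, R+1} G`, and the second fresh vertex `R + 2` gives `R (R + 1) {R+1, R+2} G`.
-/

open Finset
open scoped Classical

/-- A vertex set of an edge (two distinct positive integers) or a leg (one positive integer). -/
abbrev EdgeOrLeg : Type := {s : Finset ℕ+ // s.card = 1 ∨ s.card = 2}

/-- A multigraph: a finitely supported multiplicity function on edges and legs. -/
abbrev Multigraph : Type := EdgeOrLeg →₀ ℕ

/-- The complex vector space (indeed algebra) with basis the multigraphs. -/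
abbrev GAlg : Type := AddMonoidAlgebra ℂ Multigraph

/-- The singleton `{v}` viewed as a leg. -/
def legSet (v : ℕ+) : EdgeOrLeg := ⟨{v}, Or.inl (Finset.card_singleton v)⟩

/-- The element of the overlap algebra given by a single edge `{v,w}` (`v ≠ w`);
a degenerate edge at a single vertex counts as the factor `1`. -/
noncomputable def edgeElem (v w : ℕ+) : GAlg :=
  if h : v = w then 1
  else AddMonoidAlgebra.single (Finsupp.single ⟨{v, w}, Or.inr (Finset.card_pair h)⟩ 1) 1

/-- The vertex set of a multigraph. -/
def VG (G : Multigraph) : Finset ℕ+ := G.support.biUnion fun s => s.1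

/-- A multigraph is legless when every element of its support is an edge. -/
def Legless (G : Multigraph) : Prop := ∀ s ∈ G.support, s.1.card = 2

/-- The multiset of legs (counted with multiplicity) of a multigraph. -/
def legMultiset (G : Multigraph) : Multiset ℕ+ :=
  G.sum fun s n => if s.1.card = 1 then n • s.1.val else 0

/-- The edge part of a multigraph (forget all legs). -/
noncomputable def edgePart (G : Multigraph) : Multigraph :=
  G.filter fun s => s.1.card = 2

/-- Sum over all perfect pairings (fixed-point free involutions) of the entries of
a list `l` of vertices, of the product of the edges joining paired entries. -/
noncomputable def pairingSum (l : List ℕ+) : GAlg :=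
  ∑ π ∈ Finset.univ.filter
      (fun π : Equiv.Perm (Fin l.length) => ∀ i, π i ≠ i ∧ π (π i) = i),
    ∏ i ∈ Finset.univ.filter (fun i : Fin l.length => i < π i),
      edgeElem (l.get i) (l.get (π i))

/-- Wick contraction of a single multigraph: its edge part times the sum over all
perfect pairings of its multiset of legs of the products of the resulting edges.
(If the number of legs is odd there are no pairings and the result is `0`.) -/
noncomputable def wickBasis (G : Multigraph) : GAlg :=
  AddMonoidAlgebra.single (edgePart G) 1 * pairingSum (legMultiset G).toList

/-- The Wick contraction operator `C` on the overlap algebra. -/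
noncomputable def Cop : Module.End ℂ GAlg :=
  (Finsupp.lsum ℂ fun G => LinearMap.toSpanSingleton ℂ GAlg (wickBasis G)) ∘ₗ
    (AddMonoidAlgebra.coeffLinearEquiv ℂ).toLinearMap

/-- Adding one leg at vertex `v` to a multigraph, i.e. the product `{v}·G`. -/
noncomputable def addLeg (v : ℕ+) (G : Multigraph) : Multigraph := Finsupp.single (legSet v) 1 + G

/-- The smallest positive integer not belonging to `V(G)`. -/
noncomputable def fresh (G : Multigraph) : ℕ+ :=
  ⟨sInf {n : ℕ | 0 < n ∧ ∀ v ∈ VG G, (v : ℕ) ≠ n}, by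
    have hne : {n : ℕ | 0 < n ∧ ∀ v ∈ VG G, (v : ℕ) ≠ n}.Nonempty := by
      refine ⟨(VG G).sup (fun v => (v : ℕ)) + 1, Nat.succ_pos _, fun v hv => ?_⟩
      have h2 : (v : ℕ) ≤ (VG G).sup (fun v => (v : ℕ)) := Finset.le_sup hv
      omega
    exact (Nat.sInf_mem hne).1⟩

/-- The operator `δ` on a basis multigraph. -/
noncomputable def gdeltaBasis (G : Multigraph) : GAlg :=
  (∑ v ∈ VG G, AddMonoidAlgebra.single (addLeg v G) 1)
    - ((VG G).card : ℂ) • AddMonoidAlgebra.single (addLeg (fresh G) G) 1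

/-- The Gaussian operator `δ` on the overlap algebra. -/
noncomputable def gdelta : Module.End ℂ GAlg :=
  (Finsupp.lsum ℂ fun G => LinearMap.toSpanSingleton ℂ GAlg (gdeltaBasis G)) ∘ₗ
    (AddMonoidAlgebra.coeffLinearEquiv ℂ).toLinearMap

/-- `Δ := C ∘ δ ∘ δ`. -/
noncomputable def DeltaOp : Module.End ℂ GAlg := Cop * gdelta * gdelta

/-- The subspace `𝒢̃''` spanned by the legless multigraphs. -/
noncomputable def leglessSpan : Submodule ℂ GAlg :=
  Submodule.span ℂ {x : GAlg | ∃ G : Multigraph, Legless G ∧ x = AddMonoidAlgebra.single G 1}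

lemma Finset.sum_sum_eq_two_nsmul_sum_lt_add_sum_diag {ι M : Type*} [LinearOrder ι]
    [AddCommMonoid M] (s : Finset ι) (F : ι → ι → M) (hF : ∀ i j, F i j = F j i) :
    ∑ i ∈ s, ∑ j ∈ s, F i j
      = 2 • ∑ p ∈ (s ×ˢ s).filter (fun p => p.1 < p.2), F p.1 p.2 + ∑ i ∈ s, F i i := by
  have htrichotomy : ∀ i j, F i j
      = (if i < j then F i j else 0) + (if j < i then F j i else 0)
        + (if i = j then F i j else 0) := by
    intro i j
    rcases lt_trichotomy i j with h | rfl | h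
    · simp [h, h.not_gt, h.ne]
    · simp
    · simp [h, h.not_gt, h.ne', hF i j]
  have hlt : ∑ i ∈ s, ∑ j ∈ s, (if i < j then F i j else 0)
      = ∑ p ∈ (s ×ˢ s).filter (fun p => p.1 < p.2), F p.1 p.2 := by
    rw [Finset.sum_filter, Finset.sum_product]
  have hgt : ∑ i ∈ s, ∑ j ∈ s, (if j < i then F j i else 0)
      = ∑ i ∈ s, ∑ j ∈ s, (if i < j then F i j else 0) := Finset.sum_comm
  have hdiag : ∑ i ∈ s, ∑ j ∈ s, (if i = j then F i j else 0) = ∑ i ∈ s, F i i :=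
    Finset.sum_congr rfl fun i hi => by rw [Finset.sum_ite_eq, if_pos hi]
  rw [Finset.sum_congr rfl fun i _ => Finset.sum_congr rfl fun j _ => htrichotomy i j]
  simp only [Finset.sum_add_distrib]
  rw [hgt, hlt, hdiag, two_nsmul]

lemma Cop_single (H : Multigraph) (c : ℂ) :
    Cop (AddMonoidAlgebra.single H c) = c • wickBasis H := by
  simp [Cop]

lemma gdelta_single (H : Multigraph) (c : ℂ) :
    gdelta (AddMonoidAlgebra.single H c) = c • gdeltaBasis H := by
  simp [gdelta]

lemma edgeElem_self (v : ℕ+) : edgeElem v v = 1 := dif_pos rfl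

lemma edgeElem_comm (v w : ℕ+) : edgeElem v w = edgeElem w v := by
  by_cases h : v = w
  · rw [h]
  · simp only [edgeElem, dif_neg h, dif_neg (Ne.symm h), Finset.pair_comm v w]

lemma VG_addLeg (v : ℕ+) (G : Multigraph) : VG (addLeg v G) = insert v (VG G) := by
  have hsupp : (addLeg v G).support = insert (legSet v) G.support := by
    ext s
    by_cases h : s = legSet v
    · simp [h, addLeg]
    · simp [addLeg, h]
  rw [VG, hsupp, Finset.biUnion_insert]
  rfl

lemma legMultiset_add (G H : Multigraph) :
    legMultiset (G + H) = legMultiset G + legMultiset H :=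
  Finsupp.sum_add_index (fun _ _ => by simp) (fun _ _ _ _ => by split_ifs <;> simp [add_smul])

lemma legMultiset_addLeg (v : ℕ+) (G : Multigraph) :
    legMultiset (addLeg v G) = v ::ₘ legMultiset G := by
  rw [addLeg, legMultiset_add, legMultiset, Finsupp.sum_single_index (by simp)]
  simp [legSet]

lemma Legless.legMultiset_eq_zero {G : Multigraph} (hG : Legless G) : legMultiset G = 0 :=
  Finset.sum_eq_zero fun s hs => by simp [hG s hs]

lemma edgePart_addLeg (v : ℕ+) (G : Multigraph) : edgePart (addLeg v G) = edgePart G := by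
  ext s
  simp only [edgePart, Finsupp.filter_apply]
  split_ifs with h
  · have hs : legSet v ≠ s := fun he => by simp [← he, legSet] at h
    simp [addLeg, hs]
  · rfl

lemma Legless.edgePart_eq {G : Multigraph} (hG : Legless G) : edgePart G = G :=
  (Finsupp.filter_eq_self_iff _ _).2 fun s hs => hG s (Finsupp.mem_support_iff.2 hs)

lemma pairingSum_pair (u w : ℕ+) : pairingSum [u, w] = edgeElem u w := by
  have hpairings : (Finset.univ.filter
      fun π : Equiv.Perm (Fin 2) => ∀ i, π i ≠ i ∧ π (π i) = i) = {Equiv.swap 0 1} := by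
    decide
  have hfirst : (Finset.univ.filter fun i : Fin 2 => i < Equiv.swap 0 1 i) = {0} := by
    decide
  change ∑ π ∈ Finset.univ.filter
      (fun π : Equiv.Perm (Fin 2) => ∀ i, π i ≠ i ∧ π (π i) = i),
    ∏ i ∈ Finset.univ.filter (fun i : Fin 2 => i < π i),
      edgeElem ([u, w].get i) ([u, w].get (π i)) = _
  rw [hpairings, Finset.sum_singleton, hfirst, Finset.prod_singleton]
  rfl

lemma Legless.wickBasis_addLeg_addLeg {G : Multigraph} (hG : Legless G) (u w : ℕ+) :
    wickBasis (addLeg u (addLeg w G)) = edgeElem u w * AddMonoidAlgebra.single G 1 := by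
  have hlegs : (legMultiset (addLeg u (addLeg w G))).toList.Perm [u, w] := by
    rw [← Multiset.coe_eq_coe, Multiset.coe_toList, legMultiset_addLeg, legMultiset_addLeg,
      hG.legMultiset_eq_zero]
    rfl
  rw [wickBasis, edgePart_addLeg, edgePart_addLeg, hG.edgePart_eq, mul_comm]
  rcases List.perm_pair.1 hlegs with h | h <;> rw [h, pairingSum_pair]
  rw [edgeElem_comm]

lemma fresh_coe (G : Multigraph) :
    (fresh G : ℕ) = sInf {n : ℕ | 0 < n ∧ ∀ v ∈ VG G, (v : ℕ) ≠ n} := rfl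

lemma fresh_congr {G H : Multigraph} (h : VG G = VG H) : fresh G = fresh H :=
  PNat.eq (by rw [fresh_coe, fresh_coe, h])

lemma fresh_notMem (G : Multigraph) : fresh G ∉ VG G := fun hmem =>
  (Nat.sInf_mem (Nat.nonempty_of_pos_sInf (fresh_coe G ▸ (fresh G).pos))).2 _ hmem rfl

lemma fresh_eq_succPNat {G : Multigraph} {R : ℕ}
    (hV : VG G = (Finset.range R).image Nat.succPNat) :
    fresh G = R.succPNat := by
  have hR : R + 1 ∈ {n : ℕ | 0 < n ∧ ∀ v ∈ VG G, (v : ℕ) ≠ n} := by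
    refine ⟨R.succ_pos, fun v hv => ?_⟩
    obtain ⟨i, hi, rfl⟩ := Finset.mem_image.1 (hV ▸ hv)
    simp only [Nat.succPNat_coe, Finset.mem_range] at hi ⊢
    omega
  refine PNat.eq (le_antisymm (Nat.sInf_le hR) (le_csInf ⟨_, hR⟩ ?_))
  rintro n ⟨hpos, hn⟩
  by_contra! hlt
  simp only [Nat.succPNat_coe] at hlt
  have hmem : (n - 1).succPNat ∈ VG G :=
    hV ▸ Finset.mem_image.2 ⟨n - 1, Finset.mem_range.2 (by omega), rfl⟩
  exact hn _ hmem (by simp only [Nat.succPNat_coe]; omega)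

lemma DeltaOp_single_eq_sum (G : Multigraph) :
    DeltaOp (AddMonoidAlgebra.single G 1) = ∑ v ∈ VG G, Cop (gdeltaBasis (addLeg v G))
      - ((VG G).card : ℂ) • Cop (gdeltaBasis (addLeg (fresh G) G)) := by
  change Cop (gdelta (gdelta _)) = _
  simp only [gdelta_single, one_smul, gdeltaBasis, map_sub, map_sum, map_smul]

lemma Legless.Cop_gdeltaBasis_addLeg {G : Multigraph} (hG : Legless G) (v : ℕ+) :
    Cop (gdeltaBasis (addLeg v G))
      = ∑ u ∈ insert v (VG G), edgeElem u v * AddMonoidAlgebra.single G 1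
        - ((insert v (VG G)).card : ℂ) •
          (edgeElem (fresh (addLeg v G)) v * AddMonoidAlgebra.single G 1) := by
  simp only [gdeltaBasis, VG_addLeg, map_sub, map_sum, map_smul, Cop_single, one_smul,
    hG.wickBasis_addLeg_addLeg]

theorem Legless.DeltaOp_single {G : Multigraph} (hG : Legless G) :
    DeltaOp (AddMonoidAlgebra.single G 1)
      = ∑ v ∈ VG G, ∑ u ∈ VG G, edgeElem v u * AddMonoidAlgebra.single G 1
        - (2 * (VG G).card : ℂ) •
          ∑ u ∈ VG G, edgeElem u (fresh G) * AddMonoidAlgebra.single G 1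
        - ((VG G).card : ℂ) • AddMonoidAlgebra.single G 1
        + ((VG G).card * ((VG G).card + 1) : ℂ) •
          (edgeElem (fresh G) (fresh (addLeg (fresh G) G)) * AddMonoidAlgebra.single G 1) := by
  set B : GAlg := AddMonoidAlgebra.single G 1
  set f := fresh G
  have hf : f ∉ VG G := fresh_notMem G
  have hold : ∀ v ∈ VG G, Cop (gdeltaBasis (addLeg v G))
      = ∑ u ∈ VG G, edgeElem v u * B - ((VG G).card : ℂ) • (edgeElem v f * B) := by
    intro v hv
    have hVv : VG (addLeg v G) = VG G := by rw [VG_addLeg, Finset.insert_eq_of_mem hv]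
    rw [hG.Cop_gdeltaBasis_addLeg, Finset.insert_eq_of_mem hv, fresh_congr hVv]
    simp only [edgeElem_comm _ v]
    rfl
  have hnew : Cop (gdeltaBasis (addLeg f G))
      = B + ∑ u ∈ VG G, edgeElem u f * B
        - ((VG G).card + 1 : ℂ) • (edgeElem f (fresh (addLeg f G)) * B) := by
    rw [hG.Cop_gdeltaBasis_addLeg, Finset.sum_insert hf, Finset.card_insert_of_notMem hf,
      edgeElem_self, one_mul, edgeElem_comm (fresh _) f]
    push_cast
    rfl
  rw [DeltaOp_single_eq_sum, Finset.sum_congr rfl hold, hnew, Finset.sum_sub_distrib,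
    ← Finset.smul_sum]
  module

/-- For a legless basis multigraph `G` with vertex set `{1,…,R}`,
`ΔG = 2·Σ_{1≤i<j≤R} {i,j}·G − 2R·Σ_{i=1}^R {i,R+1}·G + R(R+1)·{R+1,R+2}·G`. -/
theorem DeltaOp_apply_legless (G : Multigraph) (R : ℕ) (hG : Legless G)
    (hV : VG G = (Finset.range R).image Nat.succPNat) :
    DeltaOp (AddMonoidAlgebra.single G 1)
      = (2 : ℂ) • (∑ p ∈ (Finset.range R ×ˢ Finset.range R).filter (fun p => p.1 < p.2),
            edgeElem p.1.succPNat p.2.succPNat * AddMonoidAlgebra.single G 1)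
        - ((2 * R : ℕ) : ℂ) • (∑ i ∈ Finset.range R,
            edgeElem i.succPNat R.succPNat * AddMonoidAlgebra.single G 1)
        + ((R * (R + 1) : ℕ) : ℂ) •
            (edgeElem R.succPNat (R + 1).succPNat * AddMonoidAlgebra.single G 1) := by
  have hcard : (VG G).card = R := by
    rw [hV, Finset.card_image_of_injective _ Nat.succPNat_injective, Finset.card_range]
  have hfresh : fresh G = R.succPNat := fresh_eq_succPNat hV
  have hfresh' : fresh (addLeg R.succPNat G) = (R + 1).succPNat := by
    refine fresh_eq_succPNat ?_
    rw [VG_addLeg, hV, Finset.range_add_one, Finset.image_insert]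
  have hreindex (g : ℕ+ → GAlg) :
      ∑ v ∈ VG G, g v = ∑ i ∈ Finset.range R, g i.succPNat := by
    rw [hV, Finset.sum_image fun _ _ _ _ h => Nat.succPNat_injective h]
  rw [hG.DeltaOp_single, hfresh, hfresh', hcard]
  simp only [hreindex]
  rw [Finset.sum_sum_eq_two_nsmul_sum_lt_add_sum_diag _ _ fun i j => by rw [edgeElem_comm]]
  simp only [edgeElem_self, one_mul, Finset.sum_const, Finset.card_range]
  push_cast
  module
end

section
/- For every R and every overlap monomial G on R replicas, the function λ ↦ E_{λh}(G) is differentiable on ℝ and d/dλ E_{λh}(G) = E_{λh}(H·G), where G is regarded as a function on R+1 replicas and H(σ,J) := Σ_{i=1}^R h(σ_i,J) − R·h(σ_{R+1},J). -/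
open MeasureTheory ProbabilityTheory Finset

/-- The deformed random Gibbs weight `μ_J^λ(σ) = μ_J(σ)e^{λh(σ,J)} / Σ_τ μ_J(τ)e^{λh(τ,J)}`. -/
noncomputable def gibbs {Ωσ ΩJ : Type*} [Fintype Ωσ] (μ : ΩJ → Ωσ → ℝ)
    (h : Ωσ → ΩJ → ℝ) (lam : ℝ) (J : ΩJ) (σ : Ωσ) : ℝ :=
  μ J σ * Real.exp (lam * h σ J) / ∑ τ, μ J τ * Real.exp (lam * h τ J)

/-- The deformed quenched expectation `E_{λh}(F)` of a function `F` on `R` replicas. -/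
noncomputable def qE {Ωσ ΩJ : Type*} [Fintype Ωσ] [MeasurableSpace ΩJ] (ν : Measure ΩJ)
    (μ : ΩJ → Ωσ → ℝ) (h : Ωσ → ΩJ → ℝ) (lam : ℝ) (R : ℕ)
    (F : (Fin R → Ωσ) → ΩJ → ℝ) : ℝ :=
  ∫ J, ∑ σ : Fin R → Ωσ, F σ J * ∏ r, gibbs μ h lam J (σ r) ∂ν

/-- The overlap monomial `σ ↦ ∏_{1 ≤ i < j ≤ R} c_{σ_i,σ_j}^{m_{i,j}}` on `R` replicas. -/
def overlapMonomial {Ωσ : Type*} [Fintype Ωσ] (c : Ωσ → Ωσ → ℝ) (R : ℕ)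
    (m : Fin R → Fin R → ℕ) : (Fin R → Ωσ) → ℝ := fun σ =>
  ∏ p ∈ Finset.univ.filter (fun p : Fin R × Fin R => p.1 < p.2), c (σ p.1) (σ p.2) ^ m p.1 p.2

/-- For `G` an overlap function on `R` replicas, the overlap polynomial `ΔG` on `R+2`
replicas: `(ΔG)(σ) = (2 Σ_{1≤i<j≤R} c_{i,j} − 2R Σ_{i=1}^R c_{i,R+1} + R(R+1) c_{R+1,R+2})·G(σ)`. -/
def covDelta {Ωσ : Type*} [Fintype Ωσ] (c : Ωσ → Ωσ → ℝ) (R : ℕ)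
    (G : (Fin R → Ωσ) → ℝ) : (Fin (R + 2) → Ωσ) → ℝ := fun σ =>
  (2 * ∑ p ∈ Finset.univ.filter (fun p : Fin R × Fin R => p.1 < p.2),
        c (σ (Fin.castAdd 2 p.1)) (σ (Fin.castAdd 2 p.2))
    - 2 * R * ∑ i : Fin R, c (σ (Fin.castAdd 2 i)) (σ ⟨R, by omega⟩)
    + R * (R + 1) * c (σ ⟨R, by omega⟩) (σ ⟨R + 1, by omega⟩))
  * G (fun i => σ (Fin.castAdd 2 i))

/-! Differentiating `∏ᵣ μ_J^λ(σᵣ)` in `λ` produces the factor `Σᵣ h(σᵣ) − R⟨h⟩_λ`, where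
`⟨h⟩_λ` is the Gibbs mean of `h`. Since the Gibbs weights sum to one, `⟨h⟩_λ` is also the average
of `h(σ_{R+1})` over an extra replica, which turns the derivative of the integrand into the
integrand of `E_{λh}(H·G)`. The Gibbs weights lie in `[0,1]` and `h` is integrable (it is
Gaussian), so `|H·G|` dominates the derivative uniformly in `λ` and one may differentiate under
`∫ dν`. -/

lemma Fin.sum_fun_succ_eq_sum_snoc {α M : Type*} [Fintype α] [AddCommMonoid M] {n : ℕ}
    (f : (Fin (n + 1) → α) → M) :
    ∑ σ, f σ = ∑ σ : Fin n → α, ∑ τ, f (Fin.snoc σ τ) := by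
  rw [← (Fin.snocEquiv fun _ => α).sum_comp, Fintype.sum_prod_type, Finset.sum_comm]
  rfl

lemma abs_sum_mul_le_sum_abs {ι : Type*} (s : Finset ι) (f w : ι → ℝ)
    (hw₀ : ∀ i ∈ s, 0 ≤ w i) (hw₁ : ∀ i ∈ s, w i ≤ 1) :
    |∑ i ∈ s, f i * w i| ≤ ∑ i ∈ s, |f i| := by
  refine (abs_sum_le_sum_abs _ _).trans (sum_le_sum fun i hi => ?_)
  rw [abs_mul, abs_of_nonneg (hw₀ i hi)]
  exact mul_le_of_le_one_right (abs_nonneg _) (hw₁ i hi)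

lemma integrable_of_map_eq_gaussianReal {Ω : Type*} [MeasurableSpace Ω] {ν : Measure Ω}
    {f : Ω → ℝ} {m : ℝ} {v : NNReal} (hf : AEMeasurable f ν)
    (hmap : ν.map f = gaussianReal m v) : Integrable f ν := by
  have hid : Integrable id (ν.map f) :=
    hmap ▸ memLp_one_iff_integrable.mp (memLp_id_gaussianReal 1)
  exact (integrable_map_measure aestronglyMeasurable_id hf).mp hid

/-- The paper's `H`. -/
def replicaH {Ωσ ΩJ : Type*} (h : Ωσ → ΩJ → ℝ) (R : ℕ) (σ : Fin (R + 1) → Ωσ) (J : ΩJ) : ℝ :=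
  ∑ i : Fin R, h (σ i.castSucc) J - R * h (σ (Fin.last R)) J

lemma integrable_replicaH {Ωσ ΩJ : Type*} [MeasurableSpace ΩJ] {ν : Measure ΩJ}
    {h : Ωσ → ΩJ → ℝ} (hh : ∀ σ, Integrable (h σ) ν) {R : ℕ} (σ : Fin (R + 1) → Ωσ) :
    Integrable (replicaH h R σ) ν :=
  (integrable_finsetSum _ fun _ _ => hh _).sub ((hh _).const_mul _)

section Gibbs

variable {Ωσ ΩJ : Type*} [Fintype Ωσ] {μ : ΩJ → Ωσ → ℝ} {h : Ωσ → ΩJ → ℝ} {J : ΩJ}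

lemma partitionFn_pos (hμ : μ J ∈ stdSimplex ℝ Ωσ) (lam : ℝ) :
    0 < ∑ τ, μ J τ * Real.exp (lam * h τ J) := by
  obtain ⟨τ, -, hτ⟩ := exists_lt_of_sum_lt (s := univ) (f := 0) (g := μ J) (by simp [hμ.2])
  exact sum_pos' (fun τ _ => mul_nonneg (hμ.1 τ) (Real.exp_pos _).le)
    ⟨τ, mem_univ τ, mul_pos hτ (Real.exp_pos _)⟩

lemma gibbs_nonneg (hμ : μ J ∈ stdSimplex ℝ Ωσ) (lam : ℝ) (σ : Ωσ) :
    0 ≤ gibbs μ h lam J σ :=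
  div_nonneg (mul_nonneg (hμ.1 σ) (Real.exp_pos _).le) (partitionFn_pos hμ lam).le

lemma gibbs_le_one (hμ : μ J ∈ stdSimplex ℝ Ωσ) (lam : ℝ) (σ : Ωσ) :
    gibbs μ h lam J σ ≤ 1 :=
  (div_le_one (partitionFn_pos hμ lam)).mpr <|
    single_le_sum (f := fun τ => μ J τ * Real.exp (lam * h τ J))
      (fun τ _ => mul_nonneg (hμ.1 τ) (Real.exp_pos _).le) (mem_univ σ)

lemma sum_gibbs (hμ : μ J ∈ stdSimplex ℝ Ωσ) (lam : ℝ) : ∑ σ, gibbs μ h lam J σ = 1 := by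
  simp only [gibbs]
  rw [← sum_div, div_self (partitionFn_pos hμ lam).ne']

lemma prod_gibbs_mem_Icc (hμ : μ J ∈ stdSimplex ℝ Ωσ) (lam : ℝ) {n : ℕ} (σ : Fin n → Ωσ) :
    ∏ r, gibbs μ h lam J (σ r) ∈ Set.Icc 0 1 :=
  ⟨prod_nonneg fun _ _ => gibbs_nonneg hμ lam _,
    prod_le_one (fun _ _ => gibbs_nonneg hμ lam _) fun _ _ => gibbs_le_one hμ lam _⟩

lemma measurable_gibbs [MeasurableSpace ΩJ] (hμ : ∀ σ, Measurable fun J => μ J σ)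
    (hh : ∀ σ, Measurable (h σ)) (lam : ℝ) (σ : Ωσ) :
    Measurable fun J => gibbs μ h lam J σ := by
  unfold gibbs
  fun_prop

lemma hasDerivAt_gibbs (hμ : μ J ∈ stdSimplex ℝ Ωσ) (σ : Ωσ) (lam : ℝ) :
    HasDerivAt (fun l => gibbs μ h l J σ)
      (gibbs μ h lam J σ * (h σ J - ∑ τ, h τ J * gibbs μ h lam J τ)) lam := by
  have hZ := partitionFn_pos (h := h) hμ lam
  have hnum : HasDerivAt (fun l => μ J σ * Real.exp (l * h σ J))
      (μ J σ * (Real.exp (lam * h σ J) * h σ J)) lam :=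
    ((hasDerivAt_mul_const _).exp).const_mul _
  have hden : HasDerivAt (fun l => ∑ τ, μ J τ * Real.exp (l * h τ J))
      (∑ τ, μ J τ * (Real.exp (lam * h τ J) * h τ J)) lam :=
    HasDerivAt.fun_sum fun τ _ => ((hasDerivAt_mul_const _).exp).const_mul _
  refine (hnum.div hden hZ.ne').congr_deriv ?_
  simp only [gibbs, mul_div_assoc', ← sum_div]
  field_simp
  congr 2
  exact sum_congr rfl fun τ _ => by ring

lemma hasDerivAt_prod_gibbs (hμ : μ J ∈ stdSimplex ℝ Ωσ) {n : ℕ} (σ : Fin n → Ωσ) (lam : ℝ) :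
    HasDerivAt (fun l => ∏ r, gibbs μ h l J (σ r))
      ((∑ r, h (σ r) J - n * ∑ τ, h τ J * gibbs μ h lam J τ) * ∏ r, gibbs μ h lam J (σ r))
      lam := by
  refine (HasDerivAt.fun_finsetProd fun r _ => hasDerivAt_gibbs hμ (σ r) lam).congr_deriv ?_
  simp only [smul_eq_mul, ← mul_assoc, prod_erase_mul _ _ (mem_univ _), ← mul_sum,
    sum_sub_distrib, sum_const, card_univ, Fintype.card_fin, nsmul_eq_mul]
  ring

lemma sum_replicaH_mul_prod_gibbs (hμ : μ J ∈ stdSimplex ℝ Ωσ) {n : ℕ}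
    (G : (Fin n → Ωσ) → ℝ) (lam : ℝ) :
    ∑ σ : Fin (n + 1) → Ωσ,
        replicaH h n σ J * G (fun i => σ i.castSucc) * ∏ r, gibbs μ h lam J (σ r)
      = ∑ σ : Fin n → Ωσ, G σ *
          ((∑ r, h (σ r) J - n * ∑ τ, h τ J * gibbs μ h lam J τ) *
            ∏ r, gibbs μ h lam J (σ r)) := by
  rw [Fin.sum_fun_succ_eq_sum_snoc]
  refine sum_congr rfl fun σ _ => ?_
  simp only [replicaH, Fin.snoc_castSucc, Fin.snoc_last, Fin.prod_univ_castSucc]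
  set P := ∏ r, gibbs μ h lam J (σ r)
  calc _ = ∑ τ, (G σ * (∑ r, h (σ r) J) * P * gibbs μ h lam J τ
              - G σ * n * P * (h τ J * gibbs μ h lam J τ)) :=
        sum_congr rfl fun τ _ => by ring
    _ = _ := by rw [sum_sub_distrib, ← mul_sum, ← mul_sum, sum_gibbs hμ]; ring

lemma hasDerivAt_sum_mul_prod_gibbs (hμ : μ J ∈ stdSimplex ℝ Ωσ) {n : ℕ}
    (G : (Fin n → Ωσ) → ℝ) (lam : ℝ) :
    HasDerivAt (fun l => ∑ σ : Fin n → Ωσ, G σ * ∏ r, gibbs μ h l J (σ r))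
      (∑ σ : Fin (n + 1) → Ωσ,
        replicaH h n σ J * G (fun i => σ i.castSucc) * ∏ r, gibbs μ h lam J (σ r)) lam := by
  rw [sum_replicaH_mul_prod_gibbs hμ]
  exact HasDerivAt.fun_sum fun σ _ => (hasDerivAt_prod_gibbs hμ σ lam).const_mul (G σ)

end Gibbs

theorem hasDerivAt_qE {Ωσ ΩJ : Type*} [Fintype Ωσ] [MeasurableSpace ΩJ] {ν : Measure ΩJ}
    [IsFiniteMeasure ν] {μ : ΩJ → Ωσ → ℝ} {h : Ωσ → ΩJ → ℝ} (hμmeas : ∀ σ, Measurable fun J => μ J σ)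
    (hμ : ∀ J, μ J ∈ stdSimplex ℝ Ωσ) (hhmeas : ∀ σ, Measurable (h σ))
    (hhint : ∀ σ, Integrable (h σ) ν) {R : ℕ} (G : (Fin R → Ωσ) → ℝ) (lam : ℝ) :
    HasDerivAt (fun l => qE ν μ h l R fun σ _ => G σ)
      (qE ν μ h lam (R + 1) fun σ J => replicaH h R σ J * G (fun i => σ i.castSucc)) lam := by
  have hgibbs := measurable_gibbs hμmeas hhmeas
  have hreplicaH : ∀ σ : Fin (R + 1) → Ωσ, Measurable (replicaH h R σ) := fun σ => by
    unfold replicaH; fun_prop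
  have hF_meas : ∀ l, Measurable fun J => ∑ σ : Fin R → Ωσ, G σ * ∏ r, gibbs μ h l J (σ r) :=
    fun l => by fun_prop
  have hF'_meas : Measurable fun J => ∑ σ : Fin (R + 1) → Ωσ,
      replicaH h R σ J * G (fun i => σ i.castSucc) * ∏ r, gibbs μ h lam J (σ r) := by
    fun_prop
  have hF_int : Integrable (fun J => ∑ σ : Fin R → Ωσ, G σ * ∏ r, gibbs μ h lam J (σ r)) ν :=
    .of_bound (hF_meas lam).aestronglyMeasurable (∑ σ, |G σ|) <| .of_forall fun J =>
      abs_sum_mul_le_sum_abs _ _ _ (fun σ _ => (prod_gibbs_mem_Icc (hμ J) lam σ).1)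
        fun σ _ => (prod_gibbs_mem_Icc (hμ J) lam σ).2
  have hbound_int : Integrable (fun J => ∑ σ : Fin (R + 1) → Ωσ,
      |replicaH h R σ J * G (fun i => σ i.castSucc)|) ν :=
    integrable_finsetSum _ fun σ _ => ((integrable_replicaH hhint σ).mul_const _).abs
  exact (hasDerivAt_integral_of_dominated_loc_of_deriv_le Filter.univ_mem
    (.of_forall fun l => (hF_meas l).aestronglyMeasurable) hF_int hF'_meas.aestronglyMeasurable
    (.of_forall fun J l _ => abs_sum_mul_le_sum_abs _ _ _
      (fun σ _ => (prod_gibbs_mem_Icc (hμ J) l σ).1) fun σ _ => (prod_gibbs_mem_Icc (hμ J) l σ).2)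
    hbound_int (.of_forall fun J l _ => hasDerivAt_sum_mul_prod_gibbs (hμ J) G l)).2

theorem deriv_qE_eq_qE_H_mul_general
    {Ωσ : Type} [Fintype Ωσ]
    {ΩJ : Type} [MeasurableSpace ΩJ] (ν : Measure ΩJ) [IsProbabilityMeasure ν]
    (μ : ΩJ → Ωσ → ℝ) (h : Ωσ → ΩJ → ℝ) (c : Ωσ → Ωσ → ℝ)
    (hμmeas : ∀ σ : Ωσ, Measurable fun J => μ J σ)
    (hμpos : ∀ J, ∀ σ : Ωσ, 0 ≤ μ J σ) (hμsum : ∀ J, ∑ σ : Ωσ, μ J σ = 1)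
    (hhmeas : ∀ σ : Ωσ, Measurable (h σ))
    (hgauss : ∀ a : Ωσ → ℝ, ∃ v : NNReal,
      Measure.map (fun J => ∑ σ : Ωσ, a σ * h σ J) ν = gaussianReal 0 v)
    (R : ℕ) (m : Fin R → Fin R → ℕ) :
    Differentiable ℝ (fun lam => qE ν μ h lam R fun σ _ => overlapMonomial c R m σ) ∧
    ∀ lam : ℝ,
      deriv (fun lam => qE ν μ h lam R fun σ _ => overlapMonomial c R m σ) lam
        = qE ν μ h lam (R + 1) fun σ J =>
            ((∑ i : Fin R, h (σ i.castSucc) J) - R * h (σ (Fin.last R)) J)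
              * overlapMonomial c R m (fun i => σ i.castSucc) := by
  have hhint : ∀ σ, Integrable (h σ) ν := fun σ => by
    classical
    obtain ⟨v, hv⟩ := hgauss (Pi.single σ 1)
    simp only [Pi.single_apply, ite_mul, one_mul, zero_mul, sum_ite_eq', mem_univ,
      if_true] at hv
    exact integrable_of_map_eq_gaussianReal (hhmeas σ).aemeasurable hv
  have hderiv := hasDerivAt_qE hμmeas (fun J => ⟨hμpos J, hμsum J⟩) hhmeas hhint
    (overlapMonomial c R m)
  exact ⟨fun lam => (hderiv lam).differentiableAt, fun lam => (hderiv lam).deriv⟩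

/-- For every overlap monomial `G` on `R` replicas, `λ ↦ E_{λh}(G)` is
differentiable and `d/dλ E_{λh}(G) = E_{λh}(H·G)`, where `G` is regarded as a function on
`R+1` replicas and `H(σ,J) = Σ_{i=1}^R h(σ_i,J) − R·h(σ_{R+1},J)`. -/
theorem deriv_qE_eq_qE_H_mul
    {Ωσ : Type} [Fintype Ωσ] [Nonempty Ωσ]
    {ΩJ : Type} [MeasurableSpace ΩJ] (ν : Measure ΩJ) [IsProbabilityMeasure ν]
    (μ : ΩJ → Ωσ → ℝ) (h : Ωσ → ΩJ → ℝ) (c : Ωσ → Ωσ → ℝ)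
    (hμmeas : ∀ σ : Ωσ, Measurable fun J => μ J σ)
    (hμpos : ∀ J, ∀ σ : Ωσ, 0 ≤ μ J σ) (hμsum : ∀ J, ∑ σ : Ωσ, μ J σ = 1)
    (hhmeas : ∀ σ : Ωσ, Measurable (h σ))
    (hgauss : ∀ a : Ωσ → ℝ, ∃ v : NNReal,
      Measure.map (fun J => ∑ σ : Ωσ, a σ * h σ J) ν = gaussianReal 0 v)
    (hcov : ∀ σ σ' : Ωσ, c σ σ' = ∫ J, h σ J * h σ' J ∂ν)
    (hnorm : ∀ σ : Ωσ, c σ σ = 1)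
    (hindep : Indep (MeasurableSpace.comap (fun J => fun σ : Ωσ => h σ J) inferInstance)
      (MeasurableSpace.comap (fun J => fun σ : Ωσ => μ J σ) inferInstance) ν)
    (R : ℕ) (m : Fin R → Fin R → ℕ) :
    Differentiable ℝ (fun lam => qE ν μ h lam R fun σ _ => overlapMonomial c R m σ) ∧
    ∀ lam : ℝ,
      deriv (fun lam => qE ν μ h lam R fun σ _ => overlapMonomial c R m σ) lam
        = qE ν μ h lam (R + 1) fun σ J =>
            ((∑ i : Fin R, h (σ i.castSucc) J) - R * h (σ (Fin.last R)) J)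
              * overlapMonomial c R m (fun i => σ i.castSucc) :=
  deriv_qE_eq_qE_H_mul_general ν μ h c hμmeas hμpos hμsum hhmeas hgauss R m
end

section
/- Wick's theorem (Isserlis): let (X_1,…,X_n) be a centered jointly Gaussian random vector. If n is odd then E[X_1⋯X_n] = 0. If n = 2m then E[X_1⋯X_{2m}] = Σ_π ∏_{i=1}^m E[X_{π(2i−1)} X_{π(2i)}], where the sum runs over all (2m−1)!! pairings π, i.e. permutations π of {1,…,2m} with π(2i−1) < π(2i) for all i and π(1) < π(3) < ⋯ < π(2m−1). -/
/-!
Polarization: averaging `(∏ εᵢ) (∑ εᵢ Xᵢ)ⁿ` over all sign vectors `ε ∈ {±1}ⁿ` kills every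
monomial except those using each index once, leaving `2ⁿ n! ∏ Xᵢ`. Hence `E[∏ Xᵢ]` is a signed
average of the moments `E[Yₑⁿ]` of the centered Gaussians `Yₑ = ∑ εᵢ Xᵢ`. These vanish for odd
`n`; for `n = 2m` they equal `(2m-1)‼ Var(Yₑ)ᵐ` with `Var(Yₑ) = ∑ εᵢ εⱼ E[XᵢXⱼ]`. Expanding the
`m`-th power and averaging over signs a second time keeps exactly the terms indexed by bijections
`Fin m × Fin 2 ≃ Fin 2m`, i.e. pairings with ordered blocks and oriented pairs. The group
`Sₘ ≀ S₂` relabelling blocks and pairs moves each of them to exactly one sorted pairing, so every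
pairing is counted `m! 2ᵐ` times, and `(2m-1)‼ m! 2ᵐ = (2m)!` cancels the normalization.
-/

open MeasureTheory ProbabilityTheory Finset
open scoped Classical Nat NNReal

namespace Wick

open Equiv

section GaussianMoments

variable {Ω : Type*} [MeasurableSpace Ω] {P : Measure Ω} {Y : Ω → ℝ} {μ : ℝ} {v : ℝ≥0}

lemma integral_pow_of_hasLaw {ν : Measure ℝ} (hY : HasLaw Y ν P) (k : ℕ) :
    ∫ ω, Y ω ^ k ∂P = ∫ x, x ^ k ∂ν :=
  hY.integral_comp (f := fun x => x ^ k) (by fun_prop)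

lemma integrable_pow_of_hasLaw_gaussianReal (hY : HasLaw Y (gaussianReal μ v) P) (k : ℕ) :
    Integrable (fun ω => Y ω ^ k) P := by
  have := hY.isProbabilityMeasure
  refine (integrable_norm_iff (hY.aemeasurable.pow_const k).aestronglyMeasurable).1 ?_
  simpa only [norm_pow] using (hY.hasGaussianLaw.memLp (p := k) (by simp)).integrable_norm_pow'

lemma integral_pow_gaussianReal_of_odd {k : ℕ} (hk : Odd k) :
    ∫ x, x ^ k ∂gaussianReal 0 v = 0 := by
  have h := integral_map (μ := gaussianReal 0 v) (f := fun x : ℝ => x ^ k)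
    (by fun_prop : AEMeasurable (fun x : ℝ => -x) _) (by fun_prop)
  rw [gaussianReal_map_neg, neg_zero] at h
  simp only [hk.neg_pow, integral_neg] at h
  linarith

lemma integral_pow_two_mul_gaussianReal (m : ℕ) :
    ∫ x, x ^ (2 * m) ∂gaussianReal 0 v = (2 * m - 1)‼ * (v : ℝ) ^ m := by
  rcases eq_or_ne v 0 with rfl | hv
  · rcases m.eq_zero_or_pos with rfl | hm
    · simp
    · simp [gaussianReal_zero_var, hm.ne']
  have hv' : (0 : ℝ) < v := by positivity
  have h_half : (((2 * m : ℕ) : ℝ) + 1) / 2 = m + 1 / 2 := by push_cast; ring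
  have h_even : ∀ x : ℝ, gaussianPDFReal 0 v x • x ^ (2 * m) = (√(2 * Real.pi * v))⁻¹ *
      (|x| ^ ((2 * m : ℕ) : ℝ) * Real.exp (-(2 * (v : ℝ))⁻¹ * |x| ^ (2 : ℝ))) := by
    intro x
    rw [gaussianPDFReal_def, Real.rpow_natCast, Real.rpow_two, sq_abs, pow_mul, pow_mul, sq_abs]
    simp only [smul_eq_mul, sub_zero]
    ring_nf
  have h_scale : (2 * (v : ℝ))⁻¹ ^ (-(((2 * m : ℕ) : ℝ) + 1) / 2) = (2 * v) ^ m * √(2 * v) := by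
    rw [Real.inv_rpow (by positivity), neg_div, Real.rpow_neg (by positivity), inv_inv, h_half,
      Real.rpow_add (by positivity), Real.rpow_natCast, Real.sqrt_eq_rpow]
  simp_rw [integral_gaussianReal_eq_integral_smul hv, h_even]
  -- fold onto `(0, ∞)`, where the integral is `½ (2v)^(m + ½) Γ(m + ½)`
  rw [integral_comp_abs (f := fun x => (√(2 * Real.pi * v))⁻¹ *
      (x ^ ((2 * m : ℕ) : ℝ) * Real.exp (-(2 * (v : ℝ))⁻¹ * x ^ (2 : ℝ)))),
    integral_const_mul, integral_rpow_mul_exp_neg_mul_rpow two_pos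
      (by have := (2 * m : ℕ).cast_nonneg (α := ℝ); linarith) (by positivity), h_scale, h_half,
    Real.Gamma_nat_add_half, show 2 * Real.pi * v = 2 * v * Real.pi by ring,
    Real.sqrt_mul (by positivity)]
  field_simp
  ring

lemma integral_sq_of_hasLaw_gaussianReal (hY : HasLaw Y (gaussianReal 0 v) P) :
    ∫ ω, Y ω ^ 2 ∂P = v := by
  simpa using (integral_pow_of_hasLaw hY 2).trans (integral_pow_two_mul_gaussianReal (v := v) 1)

end GaussianMoments

lemma doubleFactorial_two_mul_sub_one_mul (m : ℕ) :
    (2 * m - 1)‼ * (m ! * 2 ^ m) = (2 * m)! := by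
  cases m with
  | zero => rfl
  | succ k =>
    rw [show 2 * (k + 1) = 2 * k + 1 + 1 by ring,
      Nat.factorial_eq_mul_doubleFactorial (2 * k + 1),
      show 2 * k + 1 + 1 = 2 * (k + 1) by ring, Nat.doubleFactorial_two_mul,
      show 2 * (k + 1) - 1 = 2 * k + 1 by omega]
    ring

lemma sum_sum_pow_eq_sum_prod {ι R : Type*} [Fintype ι] [CommSemiring R] (t : ι → ι → R)
    (m : ℕ) :
    (∑ i, ∑ j, t i j) ^ m = ∑ h : Fin m × Fin 2 → ι, ∏ k, t (h (k, 0)) (h (k, 1)) := by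
  rw [← Fintype.sum_prod_type', Fintype.sum_pow]
  symm
  exact Fintype.sum_equiv ((Equiv.curry _ _ _).trans
    (Equiv.arrowCongr (Equiv.refl _) (piFinTwoEquiv fun _ => ι))) _ _ fun _ => rfl

section SignVectors

noncomputable def signVectors (ι : Type*) [Fintype ι] [DecidableEq ι] : Finset (ι → ℝ) :=
  Fintype.piFinset fun _ => {1, -1}

variable {α ι : Type*} [Fintype α] [Fintype ι] [DecidableEq ι]

lemma sum_signVectors_prod_mul_prod_comp_of_not_surjective {h : α → ι}
    (hh : ¬ Function.Surjective h) :
    ∑ ε ∈ signVectors ι, (∏ i, ε i) * ∏ u, ε (h u) = 0 := by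
  obtain ⟨i₀, hi₀⟩ := not_forall.1 hh
  have h_fiber : ∀ ε : ι → ℝ,
      (∏ i, ε i) * ∏ u, ε (h u) = ∏ i, ε i ^ (1 + #{u | h u = i}) := by
    intro ε
    rw [← prod_fiberwise' univ h ε, ← prod_mul_distrib]
    simp only [prod_const, pow_succ', add_comm 1]
  rw [sum_congr rfl fun ε _ => h_fiber ε, signVectors,
    ← prod_univ_sum (fun _ => {1, -1}) fun i t => t ^ (1 + #{u | h u = i})]
  refine prod_eq_zero (mem_univ i₀) ?_
  have : #{u | h u = i₀} = 0 := by simpa [filter_eq_empty_iff] using hi₀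
  simp [this, sum_pair (by norm_num : (1 : ℝ) ≠ -1)]

lemma sum_signVectors_prod_mul_prod_comp_of_bijective {h : α → ι}
    (hh : Function.Bijective h) :
    ∑ ε ∈ signVectors ι, (∏ i, ε i) * ∏ u, ε (h u) = 2 ^ Fintype.card ι := by
  have h_one : ∀ ε ∈ signVectors ι, (∏ i, ε i) * ∏ u, ε (h u) = 1 := by
    intro ε hε
    rw [Fintype.prod_bijective h hh (fun u => ε (h u)) ε (fun _ => rfl), ← prod_mul_distrib]
    refine prod_eq_one fun i _ => ?_
    rcases mem_insert.1 (Fintype.mem_piFinset.1 hε i) with hi | hi <;> simp_all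
  rw [sum_congr rfl h_one, sum_const, signVectors, Fintype.card_piFinset,
    card_pair (by norm_num : (1 : ℝ) ≠ -1)]
  simp

lemma sum_signVectors_prod_mul_sum_prod_comp [DecidableEq α]
    (hcard : Fintype.card α = Fintype.card ι) (F : (α → ι) → ℝ) :
    ∑ ε ∈ signVectors ι, (∏ i, ε i) * ∑ h : α → ι, (∏ u, ε (h u)) * F h
      = 2 ^ Fintype.card ι * ∑ σ : α ≃ ι, F σ := by
  have h_bij : ∀ h : α → ι, ∑ ε ∈ signVectors ι, (∏ i, ε i) * ∏ u, ε (h u)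
      = if Function.Bijective h then 2 ^ Fintype.card ι else 0 := by
    intro h
    split_ifs with hh
    · exact sum_signVectors_prod_mul_prod_comp_of_bijective hh
    · refine sum_signVectors_prod_mul_prod_comp_of_not_surjective fun hs => hh ?_
      exact (Fintype.bijective_iff_surjective_and_card h).2 ⟨hs, hcard⟩
  simp_rw [mul_sum, ← mul_assoc]
  rw [sum_comm]
  simp_rw [← sum_mul, h_bij, ite_mul, zero_mul, ← sum_filter, ← mul_sum]
  congr 1
  symm
  refine sum_bij (fun σ _ => ⇑σ) (fun σ _ => by simp)
    (fun σ _ τ _ h => DFunLike.coe_injective h) (fun h hh => ?_) (fun _ _ => rfl)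
  exact ⟨Equiv.ofBijective h (mem_filter.1 hh).2, mem_univ _, rfl⟩

lemma sum_signVectors_prod_mul_sum_pow (x : ι → ℝ) :
    ∑ ε ∈ signVectors ι, (∏ i, ε i) * (∑ i, ε i * x i) ^ Fintype.card ι
      = 2 ^ Fintype.card ι * (Fintype.card ι)! * ∏ i, x i := by
  have h_expand : ∀ ε : ι → ℝ, (∑ i, ε i * x i) ^ Fintype.card ι
      = ∑ h : ι → ι, (∏ u, ε (h u)) * ∏ u, x (h u) := by
    intro ε
    rw [← card_univ, ← prod_const, Fintype.prod_sum]
    simp_rw [prod_mul_distrib]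
  simp_rw [h_expand, sum_signVectors_prod_mul_sum_prod_comp rfl, Equiv.prod_comp, sum_const,
    card_univ, Fintype.card_equiv (Equiv.refl ι), nsmul_eq_mul]
  ring

lemma sum_signVectors_prod_mul_sum_sum_pow {m : ℕ} (hcard : Fintype.card ι = 2 * m)
    (c : ι → ι → ℝ) :
    ∑ ε ∈ signVectors ι, (∏ i, ε i) * (∑ i, ∑ j, ε i * ε j * c i j) ^ m
      = 2 ^ (2 * m) * ∑ σ : Fin m × Fin 2 ≃ ι, ∏ k, c (σ (k, 0)) (σ (k, 1)) := by
  have h_expand : ∀ ε : ι → ℝ, (∑ i, ∑ j, ε i * ε j * c i j) ^ m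
      = ∑ h : Fin m × Fin 2 → ι, (∏ u, ε (h u)) * ∏ k, c (h (k, 0)) (h (k, 1)) := by
    intro ε
    simp_rw [sum_sum_pow_eq_sum_prod, Fintype.prod_prod_type, Fin.prod_univ_two,
      ← prod_mul_distrib]
  simp_rw [h_expand]
  rw [sum_signVectors_prod_mul_sum_prod_comp (by simp [hcard, mul_comm])
    (fun h => ∏ k, c (h (k, 0)) (h (k, 1))), hcard]

end SignVectors

lemma sum_eq_card_smul_sum_filter_of_existsUnique {X G M : Type*} [Fintype X] [Fintype G]
    [AddCommMonoid M] (act : G → X ≃ X) (p : X → Prop) [DecidablePred p] (w : X → M)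
    (hw : ∀ g x, w (act g x) = w x) (hp : ∀ x, ∃! g, p (act g x)) :
    ∑ x, w x = Fintype.card G • ∑ x with p x, w x := by
  have h_one : ∀ x, w x = ∑ g, if p (act g x) then w (act g x) else 0 := by
    intro x
    obtain ⟨g₀, hg₀, huniq⟩ := hp x
    rw [Fintype.sum_eq_single g₀ fun g hg => if_neg fun h => hg (huniq g h), if_pos hg₀, hw]
  rw [sum_congr rfl fun x _ => h_one x, sum_comm]
  simp_rw [Equiv.sum_comp (act _) fun y => if p y then w y else 0, sum_const, ← sum_filter,
    card_univ]

lemma perm_fin_two_eq_one_or_eq_swap (s : Perm (Fin 2)) : s = 1 ∨ s = swap 0 1 := by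
  revert s
  decide

lemma apply_perm_two_of_symm {β γ : Type*} (F : β → β → γ) (hF : ∀ a b, F a b = F b a)
    (x : Fin 2 → β) (s : Perm (Fin 2)) : F (x (s 0)) (x (s 1)) = F (x 0) (x 1) := by
  rcases perm_fin_two_eq_one_or_eq_swap s with rfl | rfl
  · rfl
  · simp [hF]

lemma eq_of_lt_of_lt_perm_two {β : Type*} [Preorder β] {x : Fin 2 → β} {s s' : Perm (Fin 2)}
    (h : x (s 0) < x (s 1)) (h' : x (s' 0) < x (s' 1)) : s = s' := by
  rcases perm_fin_two_eq_one_or_eq_swap s with rfl | rfl <;>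
  rcases perm_fin_two_eq_one_or_eq_swap s' with rfl | rfl <;>
  simp only [Perm.one_apply, swap_apply_left, swap_apply_right] at h h' <;>
  first | rfl | exact (lt_asymm h h').elim

section Pairings

variable {T : Type*} [LinearOrder T] {m : ℕ}

def IsSortedPairing (f : Fin m × Fin 2 → T) : Prop :=
  (∀ k, f (k, 0) < f (k, 1)) ∧ StrictMono fun k => f (k, 0)

/-- The hyperoctahedral group `Sₘ ≀ S₂` acting on `Fin m × Fin 2`: permute the blocks, then
swap or keep the two entries of each block. -/
def blockShear (g : Perm (Fin m) × (Fin m → Perm (Fin 2))) : Perm (Fin m × Fin 2) :=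
  prodShear g.1 g.2

lemma blockShear_apply (g : Perm (Fin m) × (Fin m → Perm (Fin 2))) (k : Fin m) (b : Fin 2) :
    blockShear g (k, b) = (g.1 k, g.2 k b) := rfl

lemma injective_min_block {f : Fin m × Fin 2 → T} (hf : Function.Injective f) :
    Function.Injective fun j => min (f (j, 0)) (f (j, 1)) := by
  intro j j' h
  rcases min_choice (f (j, 0)) (f (j, 1)) with h₁ | h₁ <;>
  rcases min_choice (f (j', 0)) (f (j', 1)) with h₂ | h₂ <;>
  · simp only [h₁, h₂] at h
    exact congrArg Prod.fst (hf h)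

lemma apply_blockShear_zero_eq_min_of_lt {f : Fin m × Fin 2 → T}
    {g : Perm (Fin m) × (Fin m → Perm (Fin 2))} {k : Fin m}
    (h : f (blockShear g (k, 0)) < f (blockShear g (k, 1))) :
    f (blockShear g (k, 0)) = min (f (g.1 k, 0)) (f (g.1 k, 1)) := by
  rw [← min_eq_left h.le]
  exact apply_perm_two_of_symm min min_comm (fun b => f (g.1 k, b)) (g.2 k)

lemma existsUnique_isSortedPairing_comp_blockShear {f : Fin m × Fin 2 → T}
    (hf : Function.Injective f) : ∃! g, IsSortedPairing (f ∘ blockShear g) := by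
  set lo := fun j => min (f (j, 0)) (f (j, 1))
  have hlo : Function.Injective lo := injective_min_block hf
  have h_lo_comp : ∀ g, (∀ k, f (blockShear g (k, 0)) < f (blockShear g (k, 1))) →
      (fun k => (f ∘ blockShear g) (k, 0)) = lo ∘ g.1 :=
    fun g hg => funext fun k => apply_blockShear_zero_eq_min_of_lt (hg k)
  let g₀ : Perm (Fin m) × (Fin m → Perm (Fin 2)) := (Tuple.sort lo,
    fun k => if f (Tuple.sort lo k, 0) < f (Tuple.sort lo k, 1) then 1 else swap 0 1)
  have h_lt : ∀ k, f (blockShear g₀ (k, 0)) < f (blockShear g₀ (k, 1)) := by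
    intro k
    simp only [blockShear_apply, g₀]
    split_ifs with h
    · exact h
    · simpa using lt_of_le_of_ne (not_lt.1 h) (hf.ne (by simp))
  refine ⟨g₀, ⟨h_lt, ?_⟩, ?_⟩
  · rw [h_lo_comp _ h_lt]
    exact (Tuple.monotone_sort lo).strictMono_of_injective
      (hlo.comp (Tuple.sort lo).injective)
  · rintro ⟨ρ, s⟩ ⟨hlt, hmono⟩
    rw [h_lo_comp _ hlt] at hmono
    obtain rfl : ρ = Tuple.sort lo := Equiv.ext fun k =>
      hlo (congrFun (Tuple.unique_monotone hmono.monotone (Tuple.monotone_sort lo)) k)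
    exact Prod.ext rfl (funext fun k =>
      eq_of_lt_of_lt_perm_two (x := fun b => f (g₀.1 k, b)) (hlt k) (h_lt k))

lemma sum_equiv_eq_mul_sum_isSortedPairing [Fintype T] [DecidableEq T] (c : T → T → ℝ)
    (hc : ∀ a b, c a b = c b a) :
    ∑ σ : Fin m × Fin 2 ≃ T, ∏ k, c (σ (k, 0)) (σ (k, 1))
      = (m ! * 2 ^ m) * ∑ σ ∈ univ.filter fun σ : Fin m × Fin 2 ≃ T => IsSortedPairing σ,
          ∏ k, c (σ (k, 0)) (σ (k, 1)) := by
  have hw : ∀ g (σ : Fin m × Fin 2 ≃ T), ∏ k, c ((blockShear g).trans σ (k, 0))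
      ((blockShear g).trans σ (k, 1)) = ∏ k, c (σ (k, 0)) (σ (k, 1)) := by
    intro g σ
    simp only [Equiv.trans_apply, blockShear_apply]
    rw [← Equiv.prod_comp g.1 fun k => c (σ (k, 0)) (σ (k, 1))]
    exact prod_congr rfl fun k _ =>
      apply_perm_two_of_symm c hc (fun b => σ (g.1 k, b)) (g.2 k)
  rw [sum_eq_card_smul_sum_filter_of_existsUnique
    (fun g => (blockShear g).symm.equivCongr (Equiv.refl T)) (fun σ => IsSortedPairing σ) _
    (fun g σ => hw g σ) fun σ => existsUnique_isSortedPairing_comp_blockShear σ.injective]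
  simp [nsmul_eq_mul, Fintype.card_perm]

def pairIndex (m : ℕ) : Fin m × Fin 2 ≃ Fin (2 * m) :=
  finProdFinEquiv.trans (finCongr (Nat.mul_comm m 2))

@[simp]
lemma pairIndex_zero (k : Fin m) : pairIndex m (k, 0) = ⟨2 * k, by omega⟩ :=
  Fin.ext (by simp [pairIndex])

@[simp]
lemma pairIndex_one (k : Fin m) : pairIndex m (k, 1) = ⟨2 * k + 1, by omega⟩ :=
  Fin.ext (by simp [pairIndex, add_comm])

lemma sum_isSortedPairing_eq_sum_perm (c : Fin (2 * m) → Fin (2 * m) → ℝ) :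
    ∑ σ ∈ univ.filter fun σ : Fin m × Fin 2 ≃ Fin (2 * m) => IsSortedPairing σ,
        ∏ k, c (σ (k, 0)) (σ (k, 1))
      = ∑ π ∈ univ.filter (fun π : Perm (Fin (2 * m)) =>
            (∀ i : Fin m, π ⟨2 * i, by omega⟩ < π ⟨2 * i + 1, by omega⟩) ∧
            (∀ i j : Fin m, i < j → π ⟨2 * i, by omega⟩ < π ⟨2 * j, by omega⟩)),
          ∏ i : Fin m, c (π ⟨2 * i, by omega⟩) (π ⟨2 * i + 1, by omega⟩) := by
  symm
  refine sum_equiv ((pairIndex m).symm.equivCongr (Equiv.refl _)) (fun π => ?_)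
    fun π _ => ?_
  · simp only [mem_filter, mem_univ, true_and]
    simp [IsSortedPairing, StrictMono]
  · simp

end Pairings

section JointlyGaussian

variable {Ω ι : Type*} [MeasurableSpace Ω] {P : Measure Ω} [Fintype ι] {X : ι → Ω → ℝ}

lemma two_pow_mul_factorial_mul_integral_prod [DecidableEq ι]
    (hint : ∀ ε ∈ signVectors ι,
      Integrable (fun ω => (∑ i, ε i * X i ω) ^ Fintype.card ι) P) :
    2 ^ Fintype.card ι * (Fintype.card ι)! * ∫ ω, ∏ i, X i ω ∂P
      = ∑ ε ∈ signVectors ι, (∏ i, ε i) * ∫ ω, (∑ i, ε i * X i ω) ^ Fintype.card ι ∂P := by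
  rw [← integral_const_mul]
  simp_rw [← sum_signVectors_prod_mul_sum_pow]
  rw [integral_finsetSum _ fun ε hε => (hint ε hε).const_mul _]
  simp_rw [integral_const_mul]

lemma integral_sq_sum_mul (hX : ∀ i j, Integrable (fun ω => X i ω * X j ω) P) (a : ι → ℝ) :
    ∫ ω, (∑ i, a i * X i ω) ^ 2 ∂P = ∑ i, ∑ j, a i * a j * ∫ ω, X i ω * X j ω ∂P := by
  have h_expand : ∀ ω, (∑ i, a i * X i ω) ^ 2 = ∑ i, ∑ j, a i * a j * (X i ω * X j ω) := by
    intro ω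
    simp_rw [sq, sum_mul_sum]
    exact sum_congr rfl fun i _ => sum_congr rfl fun j _ => by ring
  simp_rw [h_expand]
  rw [integral_finsetSum _ fun i _ => integrable_finsetSum _ fun j _ => (hX i j).const_mul _]
  simp_rw [integral_finsetSum _ fun j _ => (hX _ j).const_mul _, integral_const_mul]

lemma coe_eq_sum_sum_integral_mul {v : (ι → ℝ) → ℝ≥0}
    (hX : ∀ a, HasLaw (fun ω => ∑ i, a i * X i ω) (gaussianReal 0 (v a)) P) (a : ι → ℝ) :
    (v a : ℝ) = ∑ i, ∑ j, a i * a j * ∫ ω, X i ω * X j ω ∂P := by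
  have h_memLp : ∀ i, MemLp (X i) 2 P := by
    intro i
    have h := (hX (Pi.single i 1)).hasGaussianLaw.memLp (p := 2) (by simp)
    simpa [Pi.single_apply] using h
  rw [← integral_sq_of_hasLaw_gaussianReal (hX a),
    integral_sq_sum_mul fun i j => (h_memLp i).integrable_mul (h_memLp j)]

end JointlyGaussian

end Wick

open Wick

/-- Wick's theorem (Isserlis): for a centered jointly Gaussian random
vector `(X_1,…,X_n)`, if `n` is odd then `E[X_1⋯X_n] = 0`, and if `n = 2m` then
`E[X_1⋯X_{2m}] = Σ_π ∏_{i=1}^m E[X_{π(2i−1)} X_{π(2i)}]`, the sum running over all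
pairings `π`, i.e. permutations of `{1,…,2m}` with `π(2i−1) < π(2i)` for all `i` and
`π(1) < π(3) < ⋯ < π(2m−1)`. -/
theorem wick_isserlis
    {Ω : Type} [MeasurableSpace Ω] (P : Measure Ω)
    (n : ℕ) (X : Fin n → Ω → ℝ)
    (hgauss : ∀ a : Fin n → ℝ, ∃ v : NNReal,
      Measure.map (fun ω => ∑ i, a i * X i ω) P = gaussianReal 0 v) :
    (Odd n → ∫ ω, ∏ i, X i ω ∂P = 0) ∧
    (∀ m : ℕ, (hm : n = 2 * m) →
      ∫ ω, ∏ i, X i ω ∂P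
        = ∑ π ∈ Finset.univ.filter (fun π : Equiv.Perm (Fin n) =>
            (∀ i : Fin m, π ⟨2 * i, by omega⟩ < π ⟨2 * i + 1, by omega⟩) ∧
            (∀ i j : Fin m, i < j → π ⟨2 * i, by omega⟩ < π ⟨2 * j, by omega⟩)),
            ∏ i : Fin m,
              ∫ ω, X (π ⟨2 * i, by omega⟩) ω * X (π ⟨2 * i + 1, by omega⟩) ω ∂P) := by
  choose v hv using hgauss
  have hlaw : ∀ a, HasLaw (fun ω => ∑ i, a i * X i ω) (gaussianReal 0 (v a)) P := fun a =>
    ⟨.of_map_ne_zero (by simp [hv a, IsProbabilityMeasure.ne_zero]), hv a⟩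
  have hpol := two_pow_mul_factorial_mul_integral_prod fun ε _ =>
    integrable_pow_of_hasLaw_gaussianReal (hlaw ε) (Fintype.card (Fin n))
  simp only [Fintype.card_fin, integral_pow_of_hasLaw (hlaw _)] at hpol
  have hK : (2 : ℝ) ^ n * n ! ≠ 0 := by positivity
  refine ⟨fun hn => ?_, fun m hm => ?_⟩
  · simp only [integral_pow_gaussianReal_of_odd hn, mul_zero, sum_const_zero] at hpol
    exact (mul_eq_zero.1 hpol).resolve_left hK
  · subst hm
    simp only [integral_pow_two_mul_gaussianReal, coe_eq_sum_sum_integral_mul hlaw,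
      mul_left_comm _ ((_ : ℕ) : ℝ), ← mul_sum] at hpol
    have hsymm : ∀ i j, ∫ ω, X i ω * X j ω ∂P = ∫ ω, X j ω * X i ω ∂P :=
      fun i j => integral_congr_ae (ae_of_all _ fun ω => mul_comm _ _)
    rw [sum_signVectors_prod_mul_sum_sum_pow (by simp),
      sum_equiv_eq_mul_sum_isSortedPairing _ hsymm,
      sum_isSortedPairing_eq_sum_perm fun i j => ∫ ω, X i ω * X j ω ∂P] at hpol
    refine mul_left_cancel₀ hK (hpol.trans ?_)
    rw [← doubleFactorial_two_mul_sub_one_mul]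
    push_cast
    ring
end
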